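/- Let p ≥ 1 with p+1 prime. Define the set L ⊆ ℚ of values reachable as products of factors from {1/(p+1), 2/(p+1), ..., p/(p+1)}, where the empty product is 1. Then there is a well-defined function depth : L → ℕ such that for any product of n such factors, depth of its value equals n. Equivalently, if a product of n factors equals a product of m factors (all factors in {1/(p+1),...,p/(p+1)}), then n = m. -/

import Mathlib

/-! Every factor `h / (p + 1)` has `(p + 1)`-adic norm `p + 1`, so the depth `n` is read off
the value of the product as the exponent of its `(p + 1)`-adic norm `(p + 1) ^ n`. -/

theorem padicNorm_natCast_div_prime {q h : ℕ} [Fact q.Prime] (h0 : 0 < h) (hq : h < q) :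
    padicNorm q ((h : ℚ) / q) = q := by
  rw [padicNorm.div, (padicNorm.nat_eq_one_iff h).2 (Nat.not_dvd_of_pos_of_lt h0 hq),
    padicNorm.padicNorm_p_of_prime, one_div, inv_inv]

theorem padicNorm_prod_eq_pow_card {ι : Type*} {q : ℕ} [Fact q.Prime] {s : Finset ι} {f : ι → ℚ}
    (hf : ∀ i ∈ s, padicNorm q (f i) = q) :
    padicNorm q (∏ i ∈ s, f i) = (q : ℚ) ^ s.card := by
  rw [IsAbsoluteValue.map_prod (padicNorm q), Finset.prod_congr rfl hf, Finset.prod_const]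

theorem stmt2_general (p : ℕ) (hp : Nat.Prime (p + 1))
    (n m : ℕ) (f g : ℕ → ℚ)
    (hf : ∀ k < n, ∃ h : ℕ, 1 ≤ h ∧ h ≤ p ∧ f k = (h : ℚ) / (p + 1))
    (hg : ∀ k < m, ∃ h : ℕ, 1 ≤ h ∧ h ≤ p ∧ g k = (h : ℚ) / (p + 1))
    (heq : ∏ k ∈ Finset.range n, f k = ∏ k ∈ Finset.range m, g k) :
    n = m := by
  have : Fact (p + 1).Prime := ⟨hp⟩
  have norm_factor : ∀ (u : ℕ → ℚ) (N : ℕ),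
      (∀ k < N, ∃ h : ℕ, 1 ≤ h ∧ h ≤ p ∧ u k = (h : ℚ) / (p + 1)) →
      ∀ k ∈ Finset.range N, padicNorm (p + 1) (u k) = ((p + 1 : ℕ) : ℚ) := by
    intro u N hu k hk
    obtain ⟨h, h1, hhp, huk⟩ := hu k (Finset.mem_range.1 hk)
    rw [huk]
    exact_mod_cast padicNorm_natCast_div_prime (q := p + 1) h1 (Nat.lt_succ_of_le hhp)
  have hnorm := congrArg (padicNorm (p + 1)) heq
  rw [padicNorm_prod_eq_pow_card (norm_factor f n hf),
    padicNorm_prod_eq_pow_card (norm_factor g m hg), Finset.card_range, Finset.card_range] at hnorm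
  exact Nat.pow_right_injective hp.two_le (by exact_mod_cast hnorm)

/-- If a product of n factors of the form h/(p+1), h ∈ {1,...,p}, equals a product of m
    such factors, and p+1 is prime, then n = m: the value determines the depth. -/
theorem stmt2 (p : ℕ) (hp1 : 1 ≤ p) (hp : Nat.Prime (p + 1))
    (n m : ℕ) (f g : ℕ → ℚ)
    (hf : ∀ k < n, ∃ h : ℕ, 1 ≤ h ∧ h ≤ p ∧ f k = (h : ℚ) / (p + 1))
    (hg : ∀ k < m, ∃ h : ℕ, 1 ≤ h ∧ h ≤ p ∧ g k = (h : ℚ) / (p + 1))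
    (heq : ∏ k ∈ Finset.range n, f k = ∏ k ∈ Finset.range m, g k) :
    n = m :=
  stmt2_general p hp n m f g hf hg heq
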